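/- arXiv:0704.0596 — 7 statements merged into one kernel-verified Lean document; each statement's English description precedes it below -/
import Mathlib

section
/- Let (V, g) be a pseudo-Euclidean vector space of dimension n ≥ 4 and let W be an algebraic curvature tensor on V with the symmetries of a Weyl tensor (including vanishing Ricci trace), such that there exists a nonzero null vector u with W(u,·,·,·) = 0 and W(v,v',·,·) = 0 for all v, v' orthogonal to u. If additionally W(u',v,u',v') = 0 for all v, v' orthogonal to u, where u' is a null vector with g(u,u') = 1, then W = 0. -/
/-! Since `g u u' = 1`, every vector splits as `x = (g u x) • u' + k` with `k ⊥ u`, so a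
multilinear form vanishes as soon as it vanishes whenever each argument is `u'` or orthogonal
to `u`. Antisymmetry in each pair and pair symmetry reduce all such values of `W` to
`W(v, v', ·, ·)` and `W(u', v, u', v')` with `v, v' ⊥ u`, which vanish by hypothesis. -/

section Splitting

variable {R M N : Type*} [CommRing R] [AddCommGroup M] [Module R M] [AddCommMonoid N]
  [Module R N] {φ : M →ₗ[R] R} {e : M}

theorem LinearMap.eq_zero_of_apply_eq_zero_of_ker (he : φ e = 1) {f : M →ₗ[R] N}
    (hfe : f e = 0) (hker : ∀ k, φ k = 0 → f k = 0) : f = 0 := by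
  ext x
  have hk : φ (x - φ x • e) = 0 := by simp [he]
  rw [LinearMap.zero_apply, ← add_sub_cancel (φ x • e) x, map_add, map_smul, hfe, hker _ hk,
    smul_zero, add_zero]

theorem LinearMap.eq_zero_of_apply₂_eq_zero_of_ker (he : φ e = 1)
    {B : M →ₗ[R] M →ₗ[R] N} (hee : B e e = 0) (hek : ∀ k, φ k = 0 → B e k = 0)
    (hke : ∀ k, φ k = 0 → B k e = 0) (hkk : ∀ k k', φ k = 0 → φ k' = 0 → B k k' = 0) :
    B = 0 :=
  eq_zero_of_apply_eq_zero_of_ker he (eq_zero_of_apply_eq_zero_of_ker he hee hek)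
    fun k hk => eq_zero_of_apply_eq_zero_of_ker he (hke k hk) (hkk k · hk)

end Splitting

theorem stmt_6_general {V : Type*} [AddCommGroup V] [Module ℝ V]
    (g : V →ₗ[ℝ] V →ₗ[ℝ] ℝ)
    (W : V →ₗ[ℝ] V →ₗ[ℝ] V →ₗ[ℝ] V →ₗ[ℝ] ℝ)
    (hskew₁ : ∀ x y z w, W x y z w = - W y x z w)
    (hpair : ∀ x y z w, W x y z w = W z w x y)
    (u : V)
    (hperp : ∀ v v', g u v = 0 → g u v' = 0 → ∀ z w, W v v' z w = 0)
    (u' : V) (huu' : g u u' = 1)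
    (hWu' : ∀ v v', g u v = 0 → g u v' = 0 → W u' v u' v' = 0) :
    W = 0 := by
  have hskew₂ : ∀ x y z w, W x y z w = - W x y w z := fun x y z w => by
    rw [hpair, hskew₁, hpair]
  have hu'u' : W u' u' = 0 := by
    ext z w
    show W u' u' z w = 0
    linarith [hskew₁ u' u' z w]
  have hW_u'_perp : ∀ v, g u v = 0 → W u' v = 0 := fun v hv =>
    LinearMap.eq_zero_of_apply₂_eq_zero_of_ker huu'
      (by linarith [hskew₂ u' v u' u'])
      (fun k hk => hWu' v k hv hk)
      (fun k hk => by linarith [hskew₂ u' v k u', hWu' v k hv hk])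
      (fun k k' hk hk' => by rw [hpair]; exact hperp k k' hk hk' u' v)
  have hW_u' : W u' = 0 :=
    LinearMap.eq_zero_of_apply_eq_zero_of_ker huu' hu'u' hW_u'_perp
  refine LinearMap.eq_zero_of_apply₂_eq_zero_of_ker huu' hu'u'
    (fun k _ => by rw [hW_u']; rfl) (fun k _ => ?_) (fun k k' hk hk' => ?_)
  · ext z w
    simp [hskew₁ k u' z w, hW_u']
  · ext z w
    exact hperp k k' hk hk' z w

/-- Let `(V,g)` be a pseudo-Euclidean vector space of dimension `n ≥ 4` and `W` an
algebraic curvature tensor with the symmetries of a Weyl tensor (including vanishing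
Ricci trace, expressed via arbitrary pairs of `g`-biorthogonal bases).  If there is a
nonzero null vector `u` with `W(u,·,·,·) = 0` and `W(v,v',·,·) = 0` for all `v, v' ⊥ u`,
and moreover `W(u',v,u',v') = 0` for all `v, v' ⊥ u`, where `u'` is a null vector with
`g(u,u') = 1`, then `W = 0`. -/
theorem stmt_6 {V : Type*} [AddCommGroup V] [Module ℝ V] [FiniteDimensional ℝ V]
    (n : ℕ) (hn : 4 ≤ n) (hdim : Module.finrank ℝ V = n)
    (g : V →ₗ[ℝ] V →ₗ[ℝ] ℝ)
    (hgsym : ∀ x y, g x y = g y x)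
    (hgnd : ∀ x, (∀ y, g x y = 0) → x = 0)
    (W : V →ₗ[ℝ] V →ₗ[ℝ] V →ₗ[ℝ] V →ₗ[ℝ] ℝ)
    (hskew₁ : ∀ x y z w, W x y z w = - W y x z w)
    (hpair : ∀ x y z w, W x y z w = W z w x y)
    (hbianchi : ∀ x y z w, W x y z w + W y z x w + W z x y w = 0)
    (htracefree : ∀ b b' : Fin n → V,
      (∀ i j, g (b i) (b' j) = if i = j then 1 else 0) →
      ∀ x w, ∑ i, W (b i) x w (b' i) = 0)
    (u : V) (hu0 : u ≠ 0) (hunull : g u u = 0)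
    (huW : ∀ x y z, W u x y z = 0)
    (hperp : ∀ v v', g u v = 0 → g u v' = 0 → ∀ z w, W v v' z w = 0)
    (u' : V) (hu'null : g u' u' = 0) (huu' : g u u' = 1)
    (hWu' : ∀ v v', g u v = 0 → g u v' = 0 → W u' v u' v' = 0) :
    W = 0 :=
  stmt_6_general g W hskew₁ hpair u hperp u' huu' hWu'
end

section
/- Let g be a nondegenerate symmetric bilinear form on a vector space V of dimension n ≥ 4, let u be a nonzero null vector and u' a null vector with g(u,u') = 1. Suppose W is an algebraic Weyl tensor (curvature symmetries plus trace-free) with W(v,v',·,·) = 0 for all v, v' in u⊥. Then W(u,·,·,·) = 0. -/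
/-!
Extend `u` to a basis `b` of `V` and let `b'` be the `g`-dual basis, so that `g u (b' i) = 0`
except at the index `i₀` of `u`. For `q ∈ u⊥`, pair symmetry turns every term
`W (b i) x q (b' i)`, `i ≠ i₀`, of the trace into `W q (b' i) (b i) x = 0`, so trace-freeness
leaves `W u x q (b' i₀) = 0`. Since `W u x q` vanishes on `u⊥`, it is a multiple of `g u`,
hence zero. So the alternating form `W u x` vanishes on `u⊥ × V`, and therefore everywhere,
because `V = u⊥ ⊕ span {b' i₀}`.
-/

open Module

theorem Module.Basis.exists_fin_apply_eq {K V : Type*} [DivisionRing K] [AddCommGroup V]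
    [Module K V] [FiniteDimensional K V] {n : ℕ} (hdim : finrank K V = n) {u : V} (hu : u ≠ 0) :
    ∃ (e : Basis (Fin n) K V) (i₀ : Fin n), e i₀ = u := by
  have hs : LinearIndepOn K id {u} := .singleton hu
  let σ := (Basis.extend hs).indexEquiv (finBasisOfFinrankEq K V hdim)
  exact ⟨(Basis.extend hs).reindex σ, σ ⟨u, Basis.subset_extend hs rfl⟩, by simp⟩

theorem LinearMap.BilinForm.exists_biorthogonal_fin_apply_eq {K V : Type*} [Field K]
    [AddCommGroup V] [Module K V] [FiniteDimensional K V] {n : ℕ} (hdim : finrank K V = n)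
    {g : LinearMap.BilinForm K V} (hg : g.SeparatingLeft) {u : V} (hu : u ≠ 0) :
    ∃ (b b' : Fin n → V) (i₀ : Fin n),
      b i₀ = u ∧ ∀ i j, g (b i) (b' j) = if i = j then 1 else 0 := by
  obtain ⟨e, i₀, he⟩ := Basis.exists_fin_apply_eq hdim hu
  have hflip : g.flip.Nondegenerate := (Nondegenerate.ofSeparatingLeft hg).flip
  exact ⟨e, g.flip.dualBasis hflip e, i₀, he, fun i j ↦ apply_dualBasis_left hflip e j i⟩

theorem LinearMap.IsAlt.eq_zero_of_apply_eq_zero_of_mem_ker {R M N : Type*} [CommRing R]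
    [AddCommGroup M] [Module R M] [AddCommGroup N] [Module R N] {B : M →ₗ[R] M →ₗ[R] N}
    (hB : B.IsAlt) {f : M →ₗ[R] R} {v : M} (hv : f v = 1)
    (hker : ∀ y, f y = 0 → ∀ z, B y z = 0) : B = 0 := by
  have hsplit : ∀ y z, B y z = f y • B v z := fun y z ↦ by
    have h := hker (y - f y • v) (by simp [hv]) z
    rwa [map_sub, map_smul, LinearMap.sub_apply, sub_eq_zero] at h
  ext y z
  rw [hsplit, ← hB.neg, hsplit, hB.self_eq_zero]
  simp

section WeylTensor

variable {R V : Type*} [CommRing R] [AddCommGroup V] [Module R V]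
  {g : V →ₗ[R] V →ₗ[R] R} {W : V →ₗ[R] V →ₗ[R] V →ₗ[R] V →ₗ[R] R} {u : V}

theorem weyl_apply_perp_eq_of_apply_eq (hpair : ∀ x y z w, W x y z w = W z w x y)
    (hperp : ∀ v v', g u v = 0 → g u v' = 0 → ∀ z w, W v v' z w = 0)
    (x : V) {q : V} (hq : g u q = 0) {v v' : V} (hv : g u v = g u v') :
    W u x q v = W u x q v' := by
  rw [← sub_eq_zero, ← map_sub, hpair]
  exact hperp q (v - v') hq (by rw [map_sub, hv, sub_self]) u x

theorem weyl_apply_perp_dual_eq_zero (hpair : ∀ x y z w, W x y z w = W z w x y)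
    (hperp : ∀ v v', g u v = 0 → g u v' = 0 → ∀ z w, W v v' z w = 0)
    {ι : Type*} [Fintype ι] [DecidableEq ι] {b b' : ι → V}
    (hbb' : ∀ i j, g (b i) (b' j) = if i = j then 1 else 0) {i₀ : ι} (hb : b i₀ = u)
    (x : V) {q : V} (hq : g u q = 0) (htr : ∑ i, W (b i) x q (b' i) = 0) :
    W u x q (b' i₀) = 0 := by
  rwa [Finset.sum_eq_single i₀ _ (by simp), hb] at htr
  intro i _ hi
  rw [hpair]
  exact hperp q (b' i) hq (by rw [← hb, hbb', if_neg (Ne.symm hi)]) _ _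

theorem weyl_apply_eq_zero [NoZeroDivisors R] [CharZero R]
    (hskew₁ : ∀ x y z w, W x y z w = - W y x z w)
    (hpair : ∀ x y z w, W x y z w = W z w x y)
    (hperp : ∀ v v', g u v = 0 → g u v' = 0 → ∀ z w, W v v' z w = 0)
    {ι : Type*} [Fintype ι] [DecidableEq ι] {b b' : ι → V}
    (hbb' : ∀ i j, g (b i) (b' j) = if i = j then 1 else 0) {i₀ : ι} (hb : b i₀ = u)
    (htr : ∀ x w, ∑ i, W (b i) x w (b' i) = 0) (x : V) :
    W u x = 0 := by
  have hu_dual : g u (b' i₀) = 1 := by rw [← hb, hbb', if_pos rfl]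
  have halt : (W u x).IsAlt := LinearMap.isAlt_iff_eq_neg_flip.mpr <| by
    ext y z
    rw [LinearMap.neg_apply, LinearMap.neg_apply, LinearMap.flip_apply, hpair, hskew₁, ← hpair]
  refine halt.eq_zero_of_apply_eq_zero_of_mem_ker hu_dual fun q hq z ↦ ?_
  calc W u x q z = W u x q (g u z • b' i₀) :=
        weyl_apply_perp_eq_of_apply_eq hpair hperp x hq (by simp [hu_dual])
    _ = 0 := by
        rw [map_smul, weyl_apply_perp_dual_eq_zero hpair hperp hbb' hb x hq (htr x q), smul_zero]

end WeylTensor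

theorem stmt_7_general {V : Type*} [AddCommGroup V] [Module ℝ V] [FiniteDimensional ℝ V]
    (n : ℕ) (hdim : Module.finrank ℝ V = n)
    (g : V →ₗ[ℝ] V →ₗ[ℝ] ℝ)
    (hgnd : ∀ x, (∀ y, g x y = 0) → x = 0)
    (W : V →ₗ[ℝ] V →ₗ[ℝ] V →ₗ[ℝ] V →ₗ[ℝ] ℝ)
    (hskew₁ : ∀ x y z w, W x y z w = - W y x z w)
    (hpair : ∀ x y z w, W x y z w = W z w x y)
    (htracefree : ∀ b b' : Fin n → V,
      (∀ i j, g (b i) (b' j) = if i = j then 1 else 0) →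
      ∀ x w, ∑ i, W (b i) x w (b' i) = 0)
    (u : V) (hu0 : u ≠ 0)
    (hperp : ∀ v v', g u v = 0 → g u v' = 0 → ∀ z w, W v v' z w = 0) :
    ∀ x y z, W u x y z = 0 := by
  obtain ⟨b, b', i₀, hb, hbb'⟩ :=
    LinearMap.BilinForm.exists_biorthogonal_fin_apply_eq hdim hgnd hu0
  intro x
  exact LinearMap.congr_fun₂
    (weyl_apply_eq_zero hskew₁ hpair hperp hbb' hb (htracefree b b' hbb') x)

/-- Let `g` be a nondegenerate symmetric bilinear form on `V` with `dim V = n ≥ 4`, `u` a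
nonzero null vector, `u'` a null vector with `g(u,u') = 1`.  If `W` is an algebraic Weyl
tensor (curvature symmetries plus trace-freeness, the latter expressed via arbitrary
pairs of `g`-biorthogonal bases) with `W(v,v',·,·) = 0` for all `v, v' ∈ u⊥`, then
`W(u,·,·,·) = 0`. -/
theorem stmt_7 {V : Type*} [AddCommGroup V] [Module ℝ V] [FiniteDimensional ℝ V]
    (n : ℕ) (hn : 4 ≤ n) (hdim : Module.finrank ℝ V = n)
    (g : V →ₗ[ℝ] V →ₗ[ℝ] ℝ)
    (hgsym : ∀ x y, g x y = g y x)
    (hgnd : ∀ x, (∀ y, g x y = 0) → x = 0)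
    (W : V →ₗ[ℝ] V →ₗ[ℝ] V →ₗ[ℝ] V →ₗ[ℝ] ℝ)
    (hskew₁ : ∀ x y z w, W x y z w = - W y x z w)
    (hpair : ∀ x y z w, W x y z w = W z w x y)
    (hbianchi : ∀ x y z w, W x y z w + W y z x w + W z x y w = 0)
    (htracefree : ∀ b b' : Fin n → V,
      (∀ i j, g (b i) (b' j) = if i = j then 1 else 0) →
      ∀ x w, ∑ i, W (b i) x w (b' i) = 0)
    (u : V) (hu0 : u ≠ 0) (hunull : g u u = 0)
    (u' : V) (hu'null : g u' u' = 0) (huu' : g u u' = 1)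
    (hperp : ∀ v v', g u v = 0 → g u v' = 0 → ∀ z w, W v v' z w = 0) :
    ∀ x y z, W u x y z = 0 :=
  stmt_7_general n hdim g hgnd W hskew₁ hpair htracefree u hu0 hperp
end

section
/- Let ρ be a symmetric bilinear form on a vector space V equipped with a nondegenerate symmetric bilinear form g, and let D be a 1-dimensional null subspace spanned by a vector u. If the image of ρ (as an endomorphism via g) is contained in D, then ρ(u,·) = 0 and ρ = χ λ ⊗ λ for some scalar χ, where λ = g(u,·); in particular ρ has g-trace zero and ρ ∘ ρ = 0 as an endomorphism. -/
/-!
Since `ρ` is symmetric and every row `ρ(v,·)` is a multiple of `λ = g(u,·)`, so is every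
column; comparing a row and a column against a fixed `w₀` with `λ(w₀) ≠ 0` gives
`ρ = χ λ ⊗ λ`, and `ρ(u,·) = 0` because `λ(u) = g(u,u) = 0`. Nondegeneracy of `g` then
identifies `P` with the rank-one map `v ↦ χ λ(v) u`, whose square and trace are both
multiples of `λ(u) = 0`.
-/

namespace LinearMap

section CommRing

variable {R M : Type*} [CommRing R] [AddCommGroup M] [Module R M]

theorem apply_eq_zero_of_rows_mul {ρ : M →ₗ[R] M →ₗ[R] R} (hρ : ∀ x y, ρ x y = ρ y x)
    {l : M →ₗ[R] R} (hrows : ∀ v, ∃ c : R, ∀ w, ρ v w = c * l w) {u : M} (hu : l u = 0)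
    (w : M) : ρ u w = 0 := by
  obtain ⟨c, hc⟩ := hrows w
  rw [hρ, hc, hu, mul_zero]

theorem eq_smulRight_of_forall_apply_eq {g : M →ₗ[R] M →ₗ[R] R}
    (hg : ∀ x, (∀ y, g x y = 0) → x = 0) {P : M →ₗ[R] M} {f : M →ₗ[R] R} {u : M}
    (h : ∀ v w, g (P v) w = f v * g u w) : P = f.smulRight u := by
  ext v
  exact sub_eq_zero.mp (hg _ fun w => by simp [h])

theorem smulRight_comp_smulRight_self_of_apply_eq_zero {f : M →ₗ[R] R} {x : M} (hx : f x = 0) :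
    f.smulRight x ∘ₗ f.smulRight x = 0 := by
  ext v
  simp [hx]

end CommRing

section Field

variable {K V : Type*} [Field K] [AddCommGroup V] [Module K V]

theorem exists_eq_mul_mul_of_rows_mul {ρ : V →ₗ[K] V →ₗ[K] K} (hρ : ∀ x y, ρ x y = ρ y x)
    {l : V →ₗ[K] K} (hrows : ∀ v, ∃ c : K, ∀ w, ρ v w = c * l w) :
    ∃ χ : K, ∀ v w, ρ v w = χ * l v * l w := by
  by_cases hl : l = 0
  · refine ⟨0, fun v w => ?_⟩
    obtain ⟨c, hc⟩ := hrows v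
    simp [hc, hl]
  obtain ⟨w₀, hw₀⟩ : ∃ w₀, l w₀ ≠ 0 := by simpa [LinearMap.ext_iff] using hl
  obtain ⟨c₀, hc₀⟩ := hrows w₀
  refine ⟨c₀ / l w₀, fun v w => ?_⟩
  obtain ⟨c, hc⟩ := hrows v
  have hcoeff : c * l w₀ = c₀ * l v := by rw [← hc, hρ, hc₀]
  have hc' : c = c₀ / l w₀ * l v := by
    field_simp
    linear_combination hcoeff
  rw [hc, hc']

end Field

end LinearMap

theorem stmt_8_general {V : Type*} [AddCommGroup V] [Module ℝ V] [FiniteDimensional ℝ V]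
    (g : V →ₗ[ℝ] V →ₗ[ℝ] ℝ)
    (hgnd : ∀ x, (∀ y, g x y = 0) → x = 0)
    (u : V) (hunull : g u u = 0)
    (ρ : V →ₗ[ℝ] V →ₗ[ℝ] ℝ) (hρsym : ∀ x y, ρ x y = ρ y x)
    (him : ∀ v, ∃ c : ℝ, ∀ w, ρ v w = c * g u w) :
    (∀ w, ρ u w = 0) ∧
    (∃ χ : ℝ, ∀ v w, ρ v w = χ * g u v * g u w) ∧
    (∀ P : V →ₗ[ℝ] V, (∀ v w, g (P v) w = ρ v w) →
      LinearMap.trace ℝ V P = 0 ∧ P ∘ₗ P = 0) := by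
  obtain ⟨χ, hχ⟩ := LinearMap.exists_eq_mul_mul_of_rows_mul hρsym him
  have hnull : (χ • g u) u = 0 := by simp [hunull]
  refine ⟨LinearMap.apply_eq_zero_of_rows_mul hρsym him hunull, ⟨χ, hχ⟩, fun P hP => ?_⟩
  obtain rfl : P = (χ • g u).smulRight u :=
    LinearMap.eq_smulRight_of_forall_apply_eq hgnd fun v w => by simp [hP, hχ, mul_assoc]
  exact ⟨by rw [LinearMap.trace_smulRight, hnull],
    LinearMap.smulRight_comp_smulRight_self_of_apply_eq_zero hnull⟩

/-- Let `ρ` be a symmetric bilinear form on `(V,g)` (`g` nondegenerate symmetric), and let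
`D` be the null line spanned by `u` (`g(u,u) = 0`, `u ≠ 0`).  If the image of `ρ`, viewed
via `g` as an endomorphism, is contained in `D` (i.e. `ρ(v,·)` is a multiple of `g(u,·)`
for every `v`), then `ρ(u,·) = 0` and `ρ = χ λ ⊗ λ` with `λ = g(u,·)`; in particular any
endomorphism `P` with `g(Pv,·) = ρ(v,·)` has trace zero and satisfies `P ∘ P = 0`. -/
theorem stmt_8 {V : Type*} [AddCommGroup V] [Module ℝ V] [FiniteDimensional ℝ V]
    (g : V →ₗ[ℝ] V →ₗ[ℝ] ℝ)
    (hgsym : ∀ x y, g x y = g y x)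
    (hgnd : ∀ x, (∀ y, g x y = 0) → x = 0)
    (u : V) (hu0 : u ≠ 0) (hunull : g u u = 0)
    (ρ : V →ₗ[ℝ] V →ₗ[ℝ] ℝ) (hρsym : ∀ x y, ρ x y = ρ y x)
    (him : ∀ v, ∃ c : ℝ, ∀ w, ρ v w = c * g u w) :
    (∀ w, ρ u w = 0) ∧
    (∃ χ : ℝ, ∀ v w, ρ v w = χ * g u v * g u w) ∧
    (∀ P : V →ₗ[ℝ] V, (∀ v w, g (P v) w = ρ v w) →
      LinearMap.trace ℝ V P = 0 ∧ P ∘ₗ P = 0) :=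
  stmt_8_general g hgnd u hunull ρ hρsym him
end

section
/- Let b be a symmetric bilinear form and ξ a 1-form on a vector space V with dim V ≥ 2, such that the 3-tensor b_{jl} ξ_q − b_{ql} ξ_j is skew-symmetric in (j,l). Then b_{jl} ξ_q = b_{ql} ξ_j for all indices; consequently, if ξ ≠ 0 then b = φ ξ ⊗ ξ for some scalar φ. -/
/-!
For fixed `x y z` put `A = b x y * ξ z`, `B = b x z * ξ y`, `C = b y z * ξ x`. By symmetry of `b`,
skewness of the tensor at `(x, y, z)` and at `(x, z, y)` reads `2A = B + C` and `2B = A + C`,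
so `3 (A - C) = 0` and `A = C`. Hence each `b · y` is the multiple `b x₀ y / ξ x₀` of `ξ`, where
`ξ x₀ ≠ 0`, and symmetry of `b` makes that multiple itself proportional to `ξ y`.
-/

section

variable {K V : Type*} [Field K] [AddCommGroup V] [Module K V]
  {b : V →ₗ[K] V →ₗ[K] K} {ξ : V →ₗ[K] K}

theorem apply_mul_eq_apply_mul_of_skew (h3 : (3 : K) ≠ 0) (hb : ∀ x y, b x y = b y x)
    (hskew : ∀ x y z, b x y * ξ z - b z y * ξ x = -(b y x * ξ z - b z x * ξ y))
    (x y z : V) : b x y * ξ z = b z y * ξ x := by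
  have hxyz := hskew x y z
  have hxzy := hskew x z y
  rw [hb y x, hb z x] at hxyz
  rw [hb y z, hb z x, hb y x] at hxzy
  have : 3 * (b x y * ξ z - b z y * ξ x) = 0 := by linear_combination 2 * hxyz + hxzy
  simpa [h3, sub_eq_zero] using this

theorem exists_eq_mul_mul_of_apply_mul_eq_apply_mul (hb : ∀ x y, b x y = b y x)
    (hbξ : ∀ x y z, b x y * ξ z = b z y * ξ x) (hξ : ξ ≠ 0) :
    ∃ φ : K, ∀ x y, b x y = φ * ξ x * ξ y := by
  obtain ⟨x₀, hx₀⟩ : ∃ x, ξ x ≠ 0 := by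
    by_contra! h
    exact hξ (LinearMap.ext h)
  refine ⟨b x₀ x₀ / (ξ x₀ * ξ x₀), fun x y => ?_⟩
  have hx : b x y * ξ x₀ = b x₀ y * ξ x := hbξ x y x₀
  have hy : b x₀ x₀ * ξ y = b x₀ y * ξ x₀ := by rw [hbξ x₀ x₀ y, hb y x₀]
  field_simp
  linear_combination ξ x₀ * hx - ξ x * hy

end

theorem stmt_9_general {V : Type*} [AddCommGroup V] [Module ℝ V]
    (b : V →ₗ[ℝ] V →ₗ[ℝ] ℝ) (hbsym : ∀ x y, b x y = b y x)
    (ξ : V →ₗ[ℝ] ℝ)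
    (hskew : ∀ x y z,
      b x y * ξ z - b z y * ξ x = -(b y x * ξ z - b z x * ξ y)) :
    (∀ x y z, b x y * ξ z = b z y * ξ x) ∧
    (ξ ≠ 0 → ∃ φ : ℝ, ∀ x y, b x y = φ * ξ x * ξ y) := by
  have hbξ := apply_mul_eq_apply_mul_of_skew (by norm_num) hbsym hskew
  exact ⟨hbξ, exists_eq_mul_mul_of_apply_mul_eq_apply_mul hbsym hbξ⟩

/-- Let `b` be a symmetric bilinear form and `ξ` a 1-form on `V` with `dim V ≥ 2`, such
that the 3-tensor `b(x,y) ξ(z) − b(z,y) ξ(x)` is skew-symmetric in its first two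
arguments `(x,y)`.  Then `b(x,y) ξ(z) = b(z,y) ξ(x)` for all `x,y,z`; consequently, if
`ξ ≠ 0` then `b = φ ξ ⊗ ξ` for some scalar `φ`. -/
theorem stmt_9 {V : Type*} [AddCommGroup V] [Module ℝ V] [FiniteDimensional ℝ V]
    (hdim : 2 ≤ Module.finrank ℝ V)
    (b : V →ₗ[ℝ] V →ₗ[ℝ] ℝ) (hbsym : ∀ x y, b x y = b y x)
    (ξ : V →ₗ[ℝ] ℝ)
    (hskew : ∀ x y z,
      b x y * ξ z - b z y * ξ x = -(b y x * ξ z - b z x * ξ y)) :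
    (∀ x y z, b x y * ξ z = b z y * ξ x) ∧
    (ξ ≠ 0 → ∃ φ : ℝ, ∀ x y, b x y = φ * ξ x * ξ y) :=
  stmt_9_general b hbsym ξ hskew
end

section
/- Let S be a 3-tensor on a vector space V given by S(x,y,z) = 2 b(x,y) ξ(z) − b(z,y) ξ(x) − b(z,x) ξ(y), where b is a symmetric bilinear form and ξ a 1-form. If S(x,y,z) = η(x,y) λ(z) for some symmetric bilinear form η and a nonzero 1-form λ, then η = 0 and S = 0. -/
/-! The cyclic sum of `S` over its three arguments vanishes, so `η(x,y) λ(z)` has vanishing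
cyclic sum too, i.e. the symmetric product `η ⊙ λ` is zero. Evaluating at a vector `v` with
`λ(v) ≠ 0` gives successively `η(v,v) = 0`, `η(x,v) = 0` and `η(x,y) = 0`. -/

section

variable {R M : Type*} [CommRing R] [AddCommGroup M] [Module R M]

def tensorS (b : M →ₗ[R] M →ₗ[R] R) (ξ : M →ₗ[R] R) (x y z : M) : R :=
  2 * b x y * ξ z - b z y * ξ x - b z x * ξ y

theorem tensorS_cyclic_sum {b : M →ₗ[R] M →ₗ[R] R} (hb : ∀ x y, b x y = b y x)
    (ξ : M →ₗ[R] R) (x y z : M) :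
    tensorS b ξ x y z + tensorS b ξ y z x + tensorS b ξ z x y = 0 := by
  unfold tensorS
  linear_combination -ξ z * hb y x - ξ x * hb z y - ξ y * hb x z

theorem LinearMap.eq_zero_of_cyclic_sum_mul_eq_zero [NoZeroDivisors R]
    [NeZero (2 : R)] [NeZero (3 : R)] {η : M →ₗ[R] M →ₗ[R] R} (hη : ∀ x y, η x y = η y x)
    {l : M →ₗ[R] R} (hl : l ≠ 0)
    (h : ∀ x y z, η x y * l z + η y z * l x + η z x * l y = 0) : η = 0 := by
  obtain ⟨v, hv⟩ : ∃ v, l v ≠ 0 := by simpa [DFunLike.ne_iff] using hl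
  have hvv : η v v = 0 := by
    have h3 : (3 : R) * η v v * l v = 0 := by linear_combination h v v v
    simpa [hv, three_ne_zero] using h3
  have hxv : ∀ x, η x v = 0 := fun x => by
    have h2 : (2 : R) * η x v * l v = 0 := by
      linear_combination h x v v - l x * hvv + l v * hη x v
    simpa [hv, two_ne_zero] using h2
  ext x y
  have hxy : η x y * l v = 0 := by
    linear_combination h x y v - l x * hxv y - l y * hη v x - l y * hxv x
  simpa [hv] using hxy

end

theorem stmt_10_general {V : Type*} [AddCommGroup V] [Module ℝ V]
    (b : V →ₗ[ℝ] V →ₗ[ℝ] ℝ) (hbsym : ∀ x y, b x y = b y x)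
    (ξ : V →ₗ[ℝ] ℝ)
    (η : V →ₗ[ℝ] V →ₗ[ℝ] ℝ) (hηsym : ∀ x y, η x y = η y x)
    (lam : V →ₗ[ℝ] ℝ) (hlam : lam ≠ 0)
    (hS : ∀ x y z,
      2 * b x y * ξ z - b z y * ξ x - b z x * ξ y = η x y * lam z) :
    η = 0 ∧ ∀ x y z, 2 * b x y * ξ z - b z y * ξ x - b z x * ξ y = 0 := by
  have hη : η = 0 := by
    refine LinearMap.eq_zero_of_cyclic_sum_mul_eq_zero hηsym hlam fun x y z => ?_
    rw [← hS, ← hS, ← hS]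
    exact tensorS_cyclic_sum hbsym ξ x y z
  exact ⟨hη, fun x y z => by simp [hS, hη]⟩

/-- Let `S(x,y,z) = 2 b(x,y) ξ(z) − b(z,y) ξ(x) − b(z,x) ξ(y)` with `b` a symmetric
bilinear form and `ξ` a 1-form.  If `S(x,y,z) = η(x,y) λ(z)` for some symmetric bilinear
form `η` and a nonzero 1-form `λ`, then `η = 0` and `S = 0`. -/
theorem stmt_10 {V : Type*} [AddCommGroup V] [Module ℝ V] [FiniteDimensional ℝ V]
    (b : V →ₗ[ℝ] V →ₗ[ℝ] ℝ) (hbsym : ∀ x y, b x y = b y x)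
    (ξ : V →ₗ[ℝ] ℝ)
    (η : V →ₗ[ℝ] V →ₗ[ℝ] ℝ) (hηsym : ∀ x y, η x y = η y x)
    (lam : V →ₗ[ℝ] ℝ) (hlam : lam ≠ 0)
    (hS : ∀ x y z,
      2 * b x y * ξ z - b z y * ξ x - b z x * ξ y = η x y * lam z) :
    η = 0 ∧ ∀ x y z, 2 * b x y * ξ z - b z y * ξ x - b z x * ξ y = 0 :=
  stmt_10_general b hbsym ξ η hηsym lam hlam hS
end

section
/- Let (M,g) be pseudo-Riemannian with a parallel vector field u, and suppose R(·,·)u = Ω ⊗ u for a 2-form Ω (i.e. u^l R_{jkl}{}^s = Ω_{jk} u^s). If ∇R = 0 then ∇Ω = 0, and the Ricci contraction gives ρu = −Ωu, where ρu and Ωu are the vector fields g-dual to ρ(u,·) and Ω(u,·). -/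
/-- The curvature of a connection with Christoffel symbols `Γ` on a chart `E`, with the
sign convention `R(u,v)w = ∇_v∇_u w − ∇_u∇_v w + ∇_{[u,v]}w`. -/
noncomputable def curvOf {E : Type*} [NormedAddCommGroup E] [NormedSpace ℝ E]
    (Γ : E → E →L[ℝ] E →L[ℝ] E) (p : E) (x y z : E) : E :=
  fderiv ℝ Γ p y x z - fderiv ℝ Γ p x y z + Γ p y (Γ p x z) - Γ p x (Γ p y z)

section Aux
open Matrix
variable {E : Type*} [NormedAddCommGroup E] [NormedSpace ℝ E]

lemma fdca {G F : Type*} [NormedAddCommGroup G] [NormedSpace ℝ G]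
    [NormedAddCommGroup F] [NormedSpace ℝ F] {c : E → G →L[ℝ] F} {p : E}
    (hc : DifferentiableAt ℝ c p) (z : G) (d : E) :
    fderiv ℝ (fun q => c q z) p d = fderiv ℝ c p d z := by
  rw [fderiv_clm_apply hc (differentiableAt_const z)]
  simp

lemma fdca2 {G G' F : Type*} [NormedAddCommGroup G] [NormedSpace ℝ G]
    [NormedAddCommGroup G'] [NormedSpace ℝ G']
    [NormedAddCommGroup F] [NormedSpace ℝ F] {c : E → G →L[ℝ] G' →L[ℝ] F} {p : E}
    (x : G) (z : G') (d : E)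
    (hc : DifferentiableAt ℝ c p) (hc1 : DifferentiableAt ℝ (fun q => c q x) p) :
    fderiv ℝ (fun q => c q x z) p d = fderiv ℝ c p d x z := by
  have h1 := fdca (c := fun q => c q x) hc1 z d
  have h2 := fdca (c := c) hc x d
  rw [h1, h2]

/-- The curvature as a continuous linear map in its last slot. -/
noncomputable def curvCLM (Γ : E → E →L[ℝ] E →L[ℝ] E) (p : E) (x y : E) : E →L[ℝ] E :=
  fderiv ℝ Γ p y x - fderiv ℝ Γ p x y + (Γ p y).comp (Γ p x) - (Γ p x).comp (Γ p y)

lemma curvCLM_apply (Γ : E → E →L[ℝ] E →L[ℝ] E) (p x y z : E) :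
    curvCLM Γ p x y z = curvOf Γ p x y z := by
  simp [curvCLM, curvOf]

lemma curvCLM_contDiff {Γ : E → E →L[ℝ] E →L[ℝ] E} (hΓ : ContDiff ℝ (⊤ : ℕ∞) Γ) (x y : E) :
    ContDiff ℝ (⊤ : ℕ∞) (fun q => curvCLM Γ q x y) := by
  have hΓ' : ContDiff ℝ (⊤ : ℕ∞) Γ := hΓ.of_le (by simp)
  have hD : ∀ a b : E, ContDiff ℝ (⊤ : ℕ∞) (fun q => fderiv ℝ Γ q a b) := by
    intro a b
    have hb : ContDiff ℝ (⊤ : ℕ∞) (fun q => Γ q b) := hΓ.clm_apply contDiff_const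
    have e : (fun q => fderiv ℝ Γ q a b) = fun q => fderiv ℝ (fun q' => Γ q' b) q a :=
      funext fun q => (fdca ((hΓ.differentiable (by simp)) q) b a).symm
    rw [e]
    exact (hb.fderiv_right (m := ((⊤ : ℕ∞) : WithTop ℕ∞)) (by simp)).clm_apply contDiff_const
  have h1 : ContDiff ℝ (⊤ : ℕ∞) (fun q => fderiv ℝ Γ q y x) := hD y x
  have h2 : ContDiff ℝ (⊤ : ℕ∞) (fun q => fderiv ℝ Γ q x y) := hD x y
  have h3 : ContDiff ℝ (⊤ : ℕ∞) (fun q => (Γ q y).comp (Γ q x)) :=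
    (hΓ'.clm_apply contDiff_const).clm_comp (hΓ'.clm_apply contDiff_const)
  have h4 : ContDiff ℝ (⊤ : ℕ∞) (fun q => (Γ q x).comp (Γ q y)) :=
    (hΓ'.clm_apply contDiff_const).clm_comp (hΓ'.clm_apply contDiff_const)
  exact ((h1.sub h2).add h3).sub h4

lemma DGammaSym {Γ : E → E →L[ℝ] E →L[ℝ] E} (hΓ : ContDiff ℝ (⊤ : ℕ∞) Γ)
    (hΓsym : ∀ p v w, Γ p v w = Γ p w v) (p d x z : E) :
    fderiv ℝ Γ p d x z = fderiv ℝ Γ p d z x := by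
  have hd : DifferentiableAt ℝ Γ p := (hΓ.differentiable (by simp)) p
  have hdx : DifferentiableAt ℝ (fun q => Γ q x) p :=
    (((hΓ.of_le (by simp) : ContDiff ℝ (⊤:ℕ∞) Γ).clm_apply contDiff_const).differentiable
      (by simp)) p
  have hdz : DifferentiableAt ℝ (fun q => Γ q z) p :=
    (((hΓ.of_le (by simp) : ContDiff ℝ (⊤:ℕ∞) Γ).clm_apply contDiff_const).differentiable
      (by simp)) p
  have h1 := fdca2 (c := Γ) x z d hd hdx
  have h2 := fdca2 (c := Γ) z x d hd hdz
  rw [← h1, ← h2]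
  have : (fun q => Γ q x z) = fun q => Γ q z x := funext fun q => hΓsym q x z
  rw [this]

lemma gder_of_LC {g : E → E →L[ℝ] E →L[ℝ] ℝ} {Γ : E → E →L[ℝ] E →L[ℝ] E}
    (hg : ContDiff ℝ (⊤ : ℕ∞) g)
    (hLC : ∀ p d v w,
      fderiv ℝ (fun q => g q v w) p d = g p (Γ p d v) w + g p v (Γ p d w))
    (p e a b : E) :
    fderiv ℝ g p e a b = g p (Γ p e a) b + g p a (Γ p e b) := by
  have hd : DifferentiableAt ℝ g p := (hg.differentiable (by simp)) p
  have hda : DifferentiableAt ℝ (fun q => g q a) p :=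
    (((hg.of_le (by simp) : ContDiff ℝ (⊤:ℕ∞) g).clm_apply contDiff_const).differentiable
      (by simp)) p
  rw [← fdca2 (c := g) a b e hd hda]
  exact hLC p e a b

lemma bianchi {Γ : E → E →L[ℝ] E →L[ℝ] E}
    (hDsym : ∀ p d x z, fderiv ℝ Γ p d x z = fderiv ℝ Γ p d z x)
    (hΓsym : ∀ p v w, Γ p v w = Γ p w v) (p x y z : E) :
    curvOf Γ p x y z + curvOf Γ p y z x + curvOf Γ p z x y = 0 := by
  simp only [curvOf]
  rw [hDsym p y x z, hDsym p z y x, hDsym p x z y, hΓsym p x z, hΓsym p y x, hΓsym p z y]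
  abel

lemma gskew {g : E → E →L[ℝ] E →L[ℝ] ℝ} {Γ : E → E →L[ℝ] E →L[ℝ] E}
    (hg : ContDiff ℝ (⊤ : ℕ∞) g) (hΓ : ContDiff ℝ (⊤ : ℕ∞) Γ)
    (hLC : ∀ p d v w,
      fderiv ℝ (fun q => g q v w) p d = g p (Γ p d v) w + g p v (Γ p d w))
    (p x y v w : E) :
    g p (curvOf Γ p x y v) w + g p v (curvOf Γ p x y w) = 0 := by
  have gder := gder_of_LC hg hLC
  have hg' : ContDiff ℝ (⊤ : ℕ∞) g := hg.of_le (by simp)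
  have hΓ' : ContDiff ℝ (⊤ : ℕ∞) Γ := hΓ.of_le (by simp)
  have hgdiff : Differentiable ℝ g := hg'.differentiable (by simp)
  have hΓdiff : Differentiable ℝ Γ := hΓ'.differentiable (by simp)
  have hΓa : ∀ a : E, Differentiable ℝ (fun q => Γ q a) := fun a =>
    (hΓ'.clm_apply contDiff_const).differentiable (by simp)
  have hΓab : ∀ a b : E, Differentiable ℝ (fun q => Γ q a b) := fun a b =>
    ((hΓ'.clm_apply contDiff_const).clm_apply contDiff_const).differentiable (by simp)
  have hga : ∀ a : E, Differentiable ℝ (fun q => g q a) := fun a =>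
    (hg'.clm_apply contDiff_const).differentiable (by simp)
  have key : ∀ a b : E, ∀ d e : E,
      fderiv ℝ (fderiv ℝ (fun q => g q a b)) p e d =
        g p (Γ p e (Γ p d a)) b + g p (Γ p d a) (Γ p e b) + g p (fderiv ℝ Γ p e d a) b
        + g p (Γ p e a) (Γ p d b) + g p a (Γ p e (Γ p d b)) + g p a (fderiv ℝ Γ p e d b) := by
    intro a b d e
    have hGω : ContDiff ℝ (⊤ : ℕ∞) (fun q => g q a b) :=
      (hg.clm_apply contDiff_const).clm_apply contDiff_const
    have hDGdiff : Differentiable ℝ (fderiv ℝ (fun q => g q a b)) :=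
      (hGω.fderiv_right (m := 1) (WithTop.coe_le_coe.2 le_top)).differentiable (by simp)
    rw [← fdca (c := fderiv ℝ (fun q => g q a b)) (hDGdiff p) d e]
    have hrw : (fun q => fderiv ℝ (fun q' => g q' a b) q d)
        = fun q => g q (Γ q d a) b + g q a (Γ q d b) :=
      funext fun q => hLC q d a b
    rw [hrw]
    have h1' : DifferentiableAt ℝ (fun q => g q (Γ q d a)) p :=
      (hgdiff p).clm_apply (hΓab d a p)
    have h2' : DifferentiableAt ℝ (fun q => g q a (Γ q d b)) p :=
      ((hga a) p).clm_apply (hΓab d b p)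
    have h1 : DifferentiableAt ℝ (fun q => g q (Γ q d a) b) p :=
      h1'.clm_apply (differentiableAt_const b)
    rw [fderiv_fun_add h1 h2']
    have e1 : fderiv ℝ (fun q => g q (Γ q d a) b) p e
        = fderiv ℝ g p e (Γ p d a) b + g p (fderiv ℝ Γ p e d a) b := by
      rw [fdca (c := fun q => g q (Γ q d a)) h1' b e,
        fderiv_clm_apply (hgdiff p) (hΓab d a p)]
      simp only [ContinuousLinearMap.add_apply, ContinuousLinearMap.flip_apply,
        ContinuousLinearMap.coe_comp', Function.comp_apply]
      rw [fdca2 (c := Γ) d a e (hΓdiff p) (hΓa d p)]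
      ring
    have e2 : fderiv ℝ (fun q => g q a (Γ q d b)) p e
        = fderiv ℝ g p e a (Γ p d b) + g p a (fderiv ℝ Γ p e d b) := by
      rw [fderiv_clm_apply ((hga a) p) (hΓab d b p)]
      simp only [ContinuousLinearMap.add_apply, ContinuousLinearMap.flip_apply,
        ContinuousLinearMap.coe_comp', Function.comp_apply]
      rw [fdca (c := g) (hgdiff p) a e, fdca2 (c := Γ) d b e (hΓdiff p) (hΓa d p)]
      ring
    rw [ContinuousLinearMap.add_apply, e1, e2, gder p e (Γ p d a) b, gder p e a (Γ p d b)]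
    ring
  have hsym : ∀ a b d e : E,
      fderiv ℝ (fderiv ℝ (fun q => g q a b)) p e d
        = fderiv ℝ (fderiv ℝ (fun q => g q a b)) p d e := by
    intro a b d e
    have hGω : ContDiff ℝ (⊤ : ℕ∞) (fun q => g q a b) :=
      (hg.clm_apply contDiff_const).clm_apply contDiff_const
    have := (hGω.contDiffAt (x := p)).isSymmSndFDerivAt (n := (⊤ : ℕ∞)) (by simp [minSmoothness_of_isRCLikeNormedField]; exact WithTop.coe_le_coe.2 (le_top : (2 : ℕ∞) ≤ ⊤))
    exact this e d
  have h1 := key v w x y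
  have h2 := key v w y x
  have hs := hsym v w x y
  rw [h1, h2] at hs
  simp only [curvOf, map_add, map_sub, ContinuousLinearMap.add_apply,
    ContinuousLinearMap.sub_apply]
  linarith [hs]

lemma trace_skew [FiniteDimensional ℝ E] (B : E →L[ℝ] E →L[ℝ] ℝ)
    (hsym : ∀ v w, B v w = B w v)
    (hnd : ∀ v, (∀ w, B v w = 0) → v = 0)
    (A : E →ₗ[ℝ] E) (hskew : ∀ v w, B (A v) w = - B v (A w)) :
    LinearMap.trace ℝ E A = 0 := by
  classical
  let b := Module.finBasis ℝ E
  let M := LinearMap.toMatrix b b A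
  let Gm : Matrix _ _ ℝ := Matrix.of fun i j => B (b i) (b j)
  have hGM : ∀ i j, (Gm * M) i j = B (b i) (A (b j)) := by
    intro i j
    rw [Matrix.mul_apply]
    have hAb : A (b j) = ∑ k, M k j • b k := by
      conv_lhs => rw [← Module.Basis.sum_repr b (A (b j))]
      simp [M, LinearMap.toMatrix_apply]
    rw [hAb, map_sum]
    simp [Gm, mul_comm]
  have hdet : IsUnit Gm.det := by
    rw [isUnit_iff_ne_zero]
    intro h0
    obtain ⟨v, hv, hmv⟩ := (Matrix.exists_mulVec_eq_zero_iff).2 h0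
    apply hv
    set x := ∑ k, v k • b k with hxdef
    have hbx : ∀ i, B (b i) x = 0 := by
      intro i
      have h := congrFun hmv i
      rw [Matrix.mulVec, dotProduct] at h
      simpa [hxdef, Gm, map_sum, _root_.map_smul, smul_eq_mul, mul_comm] using h
    have hx0 : x = 0 := by
      apply hnd
      intro w
      rw [hsym]
      conv_lhs => rw [← Module.Basis.sum_repr b w]
      rw [map_sum B, ContinuousLinearMap.sum_apply]
      simp only [map_smul, ContinuousLinearMap.smul_apply, hbx, smul_zero, Finset.sum_const_zero]
    have : b.equivFun.symm v = 0 := by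
      rw [Module.Basis.equivFun_symm_apply]
      exact hx0
    simpa using b.equivFun.symm.injective (by simpa using this)
  have hN : M = Gm⁻¹ * (Gm * M) := by
    rw [← Matrix.mul_assoc, Matrix.nonsing_inv_mul Gm hdet, Matrix.one_mul]
  have hNT : (Gm * M)ᵀ = -(Gm * M) := by
    ext i j
    rw [Matrix.transpose_apply, hGM, Matrix.neg_apply, hGM, hsym, hskew]
  have hGT : Gmᵀ = Gm := by
    ext i j
    exact hsym _ _
  have htr : (Gm⁻¹ * (Gm * M)).trace = -(Gm⁻¹ * (Gm * M)).trace := by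
    conv_lhs => rw [← Matrix.trace_transpose, Matrix.transpose_mul, hNT,
      Matrix.transpose_nonsing_inv, hGT]
    rw [Matrix.neg_mul, Matrix.trace_neg, Matrix.trace_mul_comm]
  rw [LinearMap.trace_eq_matrix_trace ℝ b A]
  show M.trace = 0
  rw [hN]
  linarith [htr]

end Aux

section Aux2
variable {E : Type*} [NormedAddCommGroup E] [NormedSpace ℝ E]

lemma curv_add_left (Γ : E → E →L[ℝ] E →L[ℝ] E) (p v v' y z : E) :
    curvOf Γ p (v + v') y z = curvOf Γ p v y z + curvOf Γ p v' y z := by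
  simp only [curvOf, map_add, ContinuousLinearMap.add_apply]
  abel

lemma curv_smul_left (Γ : E → E →L[ℝ] E →L[ℝ] E) (p : E) (c : ℝ) (v y z : E) :
    curvOf Γ p (c • v) y z = c • curvOf Γ p v y z := by
  simp only [curvOf, map_smul, ContinuousLinearMap.smul_apply, smul_sub, smul_add]

end Aux2

/-- Let `(M,g)` be pseudo-Riemannian (chart model: `E` with Levi-Civita Christoffel
symbols `Γ` of `g`) with a parallel vector field `u`, and suppose
`R(·,·)u = Ω ⊗ u` (i.e. `u^l R_{jkl}{}^s = Ω_{jk} u^s`) for a 2-form `Ω`, which is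
uniquely determined since `u` is nowhere zero.  If `∇R = 0` then `∇Ω = 0`, and the Ricci
contraction (`ρ_{jl} = R_{jkl}{}^k`, i.e. `ρ(x,y) = tr(v ↦ R(x,v)y)`) gives
`ρ(u,·) = −Ω(u,·)`, i.e. the `g`-dual vector fields satisfy `ρu = −Ωu`. -/
theorem stmt_14 {E : Type*} [NormedAddCommGroup E] [NormedSpace ℝ E]
    [FiniteDimensional ℝ E]
    (g : E → E →L[ℝ] E →L[ℝ] ℝ) (hg : ContDiff ℝ (⊤ : ℕ∞) g)
    (hgsym : ∀ p v w, g p v w = g p w v)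
    (hgnd : ∀ p v, (∀ w, g p v w = 0) → v = 0)
    (Γ : E → E →L[ℝ] E →L[ℝ] E) (hΓ : ContDiff ℝ (⊤ : ℕ∞) Γ)
    (hΓsym : ∀ p v w, Γ p v w = Γ p w v)
    (hLC : ∀ p d v w,
      fderiv ℝ (fun q => g q v w) p d = g p (Γ p d v) w + g p v (Γ p d w))
    (u : E → E) (hu : ContDiff ℝ (⊤ : ℕ∞) u) (hu0 : ∀ p, u p ≠ 0)
    (hupar : ∀ p w, fderiv ℝ u p w + Γ p w (u p) = 0)
    (Ω : E → E → E → ℝ)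
    (hΩskew : ∀ p x y, Ω p x y = - Ω p y x)
    (hΩ : ∀ p x y, curvOf Γ p x y (u p) = Ω p x y • u p)
    (hparR : ∀ p d x y z,
      fderiv ℝ (fun q => curvOf Γ q x y z) p d + Γ p d (curvOf Γ p x y z)
        - curvOf Γ p (Γ p d x) y z - curvOf Γ p x (Γ p d y) z
        - curvOf Γ p x y (Γ p d z) = 0)
    (T : E → E → E → (E →ₗ[ℝ] E))
    (hT : ∀ p x y v, T p x y v = curvOf Γ p x v y) :
    (∀ p d x y,
      fderiv ℝ (fun q => Ω q x y) p d - Ω p (Γ p d x) y - Ω p x (Γ p d y) = 0) ∧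
    (∀ p y, LinearMap.trace ℝ E (T p (u p) y) = - Ω p (u p) y) := by
  have hu' : ContDiff ℝ (⊤ : ℕ∞) u := hu.of_le (by simp)
  have hud : Differentiable ℝ u := hu'.differentiable (by simp)
  constructor
  · -- ∇Ω = 0
    intro p d x y
    have hC : ContDiff ℝ (⊤ : ℕ∞) (fun q => curvCLM Γ q x y) := curvCLM_contDiff hΓ x y
    have hCd : Differentiable ℝ (fun q => curvCLM Γ q x y) :=
      hC.differentiable (by simp)
    set F := fun q => curvCLM Γ q x y (u q) with hFdef
    have hF : ContDiff ℝ (⊤ : ℕ∞) F := hC.clm_apply hu'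
    have hFd : Differentiable ℝ F := hF.differentiable (by simp)
    obtain ⟨φ, hφ⟩ := SeparatingDual.exists_eq_one (R := ℝ) (hu0 p)
    set a := fun q => φ (F q) with hadef
    set bb := fun q => φ (u q) with hbdef
    have ha : HasFDerivAt a ((φ : E →L[ℝ] ℝ).comp (fderiv ℝ F p)) p :=
      φ.hasFDerivAt.comp p (hFd p).hasFDerivAt
    have hbf : HasFDerivAt bb ((φ : E →L[ℝ] ℝ).comp (fderiv ℝ u p)) p :=
      φ.hasFDerivAt.comp p (hud p).hasFDerivAt
    have hb1 : bb p = 1 := hφ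
    have hbne : bb p ≠ 0 := by rw [hb1]; exact one_ne_zero
    have hinv : HasFDerivAt (fun q => (bb q)⁻¹)
        (-((bb p ^ 2)⁻¹ • ((φ : E →L[ℝ] ℝ).comp (fderiv ℝ u p)))) p := by
      have h := (hasDerivAt_inv hbne).comp_hasFDerivAt p hbf
      simpa [Function.comp_def] using h
    have hdiv := ha.mul hinv
    have heq : (fun q => Ω q x y) =ᶠ[nhds p] fun q => a q * (bb q)⁻¹ := by
      have hcont : ContinuousAt bb p := (φ.continuous.comp hu'.continuous).continuousAt
      have hev : ∀ᶠ q in nhds p, bb q ≠ 0 :=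
        hcont.eventually_ne (by rw [hb1]; exact one_ne_zero)
      filter_upwards [hev] with q hq
      have haq : a q = Ω q x y * bb q := by
        simp only [hadef, hFdef, curvCLM_apply, hΩ q x y, map_smul, smul_eq_mul, hbdef]
      rw [haq, mul_assoc, mul_inv_cancel₀ hq, mul_one]
    have hfd : fderiv ℝ (fun q => Ω q x y) p = fderiv ℝ (fun q => a q * (bb q)⁻¹) p :=
      heq.fderiv_eq
    -- compute the derivative of F
    have hu'd : fderiv ℝ u p d = -Γ p d (u p) := by
      have := hupar p d
      exact eq_neg_of_add_eq_zero_left this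
    have hcurv : ∀ z : E, fderiv ℝ (fun q => curvOf Γ q x y z) p d
        = fderiv ℝ (fun q => curvCLM Γ q x y) p d z := by
      intro z
      have hfun : (fun q => curvOf Γ q x y z) = fun q => curvCLM Γ q x y z :=
        funext fun q => (curvCLM_apply Γ q x y z).symm
      rw [hfun, fdca (hCd p) z d]
    have hDCu : fderiv ℝ (fun q => curvCLM Γ q x y) p d (u p) =
        - Γ p d (curvOf Γ p x y (u p)) + curvOf Γ p (Γ p d x) y (u p)
          + curvOf Γ p x (Γ p d y) (u p) + curvOf Γ p x y (Γ p d (u p)) := by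
      rw [← hcurv (u p)]
      have H := hparR p d x y (u p)
      rw [← sub_eq_zero]
      rw [show fderiv ℝ (fun q => curvOf Γ q x y (u p)) p d -
          (- Γ p d (curvOf Γ p x y (u p)) + curvOf Γ p (Γ p d x) y (u p)
            + curvOf Γ p x (Γ p d y) (u p) + curvOf Γ p x y (Γ p d (u p)))
          = fderiv ℝ (fun q => curvOf Γ q x y (u p)) p d + Γ p d (curvOf Γ p x y (u p))
            - curvOf Γ p (Γ p d x) y (u p) - curvOf Γ p x (Γ p d y) (u p)
            - curvOf Γ p x y (Γ p d (u p)) from by abel]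
      exact H
    have hDC : fderiv ℝ F p d
        = (Ω p (Γ p d x) y + Ω p x (Γ p d y)) • u p - Ω p x y • Γ p d (u p) := by
      rw [hFdef]
      rw [fderiv_clm_apply (hCd p) (hud p)]
      simp only [ContinuousLinearMap.add_apply, ContinuousLinearMap.flip_apply,
        ContinuousLinearMap.coe_comp', Function.comp_apply]
      rw [hDCu, hu'd, hΩ p x y, hΩ p (Γ p d x) y, hΩ p x (Γ p d y), map_smul, map_neg,
        curvCLM_apply]
      rw [add_smul]
      abel
    -- final computation
    rw [hfd, show (fun q => a q * (bb q)⁻¹) = (a * fun q => (bb q)⁻¹) from rfl, hdiv.fderiv]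
    have hφF : φ (fderiv ℝ F p d)
        = (Ω p (Γ p d x) y + Ω p x (Γ p d y)) - Ω p x y * φ (Γ p d (u p)) := by
      rw [hDC, map_sub, map_smul, map_smul, hφ]
      simp [smul_eq_mul]
    have hφu : φ (fderiv ℝ u p d) = - φ (Γ p d (u p)) := by rw [hu'd, map_neg]
    have hap : a p = Ω p x y := by
      simp only [hadef, hFdef, curvCLM_apply, hΩ p x y, map_smul, smul_eq_mul, hφ, mul_one]
    simp only [ContinuousLinearMap.add_apply, ContinuousLinearMap.smul_apply,
      ContinuousLinearMap.neg_apply, ContinuousLinearMap.coe_comp', Function.comp_apply,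
      smul_eq_mul]
    rw [hφF, hφu, hap, hb1]
    ring
  · -- Ricci contraction
    intro p y
    obtain ⟨φ, hφ⟩ := SeparatingDual.exists_eq_one (R := ℝ) (hu0 p)
    have hΩval : ∀ x z, Ω p x z = φ (curvOf Γ p x z (u p)) := by
      intro x z
      rw [hΩ p x z, map_smul, hφ, smul_eq_mul, mul_one]
    have hDsym := DGammaSym hΓ hΓsym
    -- the rank-one part as a linear functional
    let f : E →ₗ[ℝ] ℝ :=
      { toFun := fun v => Ω p v y
        map_add' := by
          intro v v'
          show Ω p (v + v') y = Ω p v y + Ω p v' y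
          rw [hΩval, hΩval, hΩval, curv_add_left, map_add]
        map_smul' := by
          intro c v
          show Ω p (c • v) y = c • Ω p v y
          rw [hΩval, hΩval, curv_smul_left, map_smul] }
    have hdecomp : T p (u p) y
        = -(dualTensorHom ℝ E E (f ⊗ₜ[ℝ] u p)) - (curvCLM Γ p y (u p) : E →ₗ[ℝ] E) := by
      apply LinearMap.ext
      intro v
      rw [hT]
      simp only [LinearMap.sub_apply, LinearMap.neg_apply, dualTensorHom_apply,
        ContinuousLinearMap.coe_coe, curvCLM_apply]
      have hfv : f v • u p = curvOf Γ p v y (u p) := by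
        show Ω p v y • u p = _
        rw [hΩ p v y]
      rw [hfv]
      have hB := bianchi hDsym hΓsym p (u p) v y
      rw [← sub_eq_zero]
      rw [show curvOf Γ p (u p) v y - (-curvOf Γ p v y (u p) - curvOf Γ p y (u p) v)
          = curvOf Γ p (u p) v y + curvOf Γ p v y (u p) + curvOf Γ p y (u p) v from by abel]
      exact hB
    rw [hdecomp, map_sub, map_neg, LinearMap.trace_eq_contract_apply, contractLeft_apply]
    have htr0 : LinearMap.trace ℝ E (curvCLM Γ p y (u p) : E →ₗ[ℝ] E) = 0 := by
      apply trace_skew (g p) (hgsym p) (hgnd p)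
      intro v w
      have := gskew hg hΓ hLC p y (u p) v w
      simp only [ContinuousLinearMap.coe_coe, curvCLM_apply]
      linarith [this]
    rw [htr0]
    show -(f (u p)) - 0 = - Ω p (u p) y
    show -(Ω p (u p) y) - 0 = _
    ring
end

section
/- Let g be a nondegenerate symmetric bilinear form on V, dim V = n ≥ 4, with null vectors u, u' satisfying g(u,u') = 1. Suppose σ is a symmetric bilinear form such that g(u,·) ∧ σ(v,·) = g(v,·) ∧ σ(u,·) for all v ∈ u⊥, and σu = c u for a scalar c. Then tr_g σ = (4 − n) c. -/
/-!
Write `π` for the `g`-orthogonal projection onto `{u, u'}⊥`, so that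
`id = g(·, u') u + g(·, u) u' + π`. Hence `tr S = g(Su, u') + g(Su', u) + tr (S ∘ π)`, and the
first two terms are `σ(u, u') = c` each. The wedge condition, evaluated at `u'`, gives
`S v = σ(v, u') u - c v` for `v ∈ {u, u'}⊥`, so
`tr (S ∘ π) = σ(πu, u') - c tr π = -(n - 2) c`.
-/

section

variable {K V : Type*} [Field K] [AddCommGroup V] [Module K V]

theorem LinearMap.trace_comp_smulRight [FiniteDimensional K V] (T : V →ₗ[K] V)
    (f : V →ₗ[K] K) (v : V) : LinearMap.trace K V (T ∘ₗ f.smulRight v) = f (T v) := by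
  have : T ∘ₗ f.smulRight v = f.smulRight (T v) := by ext; simp
  rw [this, LinearMap.trace_smulRight]

def projHyperbolicCompl (g : V →ₗ[K] V →ₗ[K] K) (u u' : V) : V →ₗ[K] V :=
  LinearMap.id - (g.flip u').smulRight u - (g.flip u).smulRight u'

section projHyperbolicCompl

variable {g : V →ₗ[K] V →ₗ[K] K} {u u' : V}

@[simp]
theorem projHyperbolicCompl_apply (x : V) :
    projHyperbolicCompl g u u' x = x - g x u' • u - g x u • u' := by
  simp [projHyperbolicCompl]

theorem id_eq_smulRight_add_smulRight_add_projHyperbolicCompl :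
    (LinearMap.id : V →ₗ[K] V) =
      (g.flip u').smulRight u + (g.flip u).smulRight u' + projHyperbolicCompl g u u' := by
  rw [projHyperbolicCompl]; abel

theorem apply_projHyperbolicCompl_left (hgsym : ∀ x y, g x y = g y x) (hunull : g u u = 0)
    (huu' : g u u' = 1) (x : V) : g u (projHyperbolicCompl g u u' x) = 0 := by
  simp [hunull, huu', hgsym u x]

theorem projHyperbolicCompl_apply_right (hu'null : g u' u' = 0) (huu' : g u u' = 1) (x : V) :
    g (projHyperbolicCompl g u u' x) u' = 0 := by
  simp [hu'null, huu']

theorem projHyperbolicCompl_self_left (hunull : g u u = 0) (huu' : g u u' = 1) :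
    projHyperbolicCompl g u u' u = 0 := by
  simp [hunull, huu']

theorem trace_projHyperbolicCompl [FiniteDimensional K V] (hgsym : ∀ x y, g x y = g y x)
    (huu' : g u u' = 1) :
    LinearMap.trace K V (projHyperbolicCompl g u u') = Module.finrank K V - 2 := by
  rw [projHyperbolicCompl, map_sub, map_sub, LinearMap.trace_id, LinearMap.trace_smulRight,
    LinearMap.trace_smulRight]
  simp only [LinearMap.flip_apply, hgsym u' u, huu']
  ring

end projHyperbolicCompl

variable {g σ : V →ₗ[K] V →ₗ[K] K} {u u' : V} {c : K}

theorem apply_eq_of_wedge (hσu : ∀ w, σ u w = c * g u w) (huu' : g u u' = 1) {v : V}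
    (hwedge : ∀ x y, g u x * σ v y - g u y * σ v x = g v x * σ u y - g v y * σ u x) (y : V) :
    σ v y = (σ v u' + c * g v u') * g u y - c * g v y := by
  have h := hwedge u' y
  rw [hσu y, hσu u', huu'] at h
  linear_combination h

theorem comp_projHyperbolicCompl {S : V →ₗ[K] V} (hS : ∀ x y, g (S x) y = σ x y)
    (hgsym : ∀ x y, g x y = g y x) (hgnd : ∀ x, (∀ y, g x y = 0) → x = 0)
    (hunull : g u u = 0) (hu'null : g u' u' = 0) (huu' : g u u' = 1)
    (hσu : ∀ w, σ u w = c * g u w)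
    (hwedge : ∀ v, g u v = 0 → ∀ x y,
      g u x * σ v y - g u y * σ v x = g v x * σ u y - g v y * σ u x) :
    S ∘ₗ projHyperbolicCompl g u u' =
      (σ.flip u' ∘ₗ projHyperbolicCompl g u u').smulRight u
        - c • projHyperbolicCompl g u u' := by
  ext x
  set v := projHyperbolicCompl g u u' x
  have hv : g u v = 0 := apply_projHyperbolicCompl_left hgsym hunull huu' x
  have hvu' : g v u' = 0 := projHyperbolicCompl_apply_right hu'null huu' x
  rw [← sub_eq_zero]
  refine hgnd _ fun y => ?_
  have hσv := apply_eq_of_wedge hσu huu' (hwedge v hv) y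
  simp only [LinearMap.comp_apply, LinearMap.sub_apply, LinearMap.smulRight_apply,
    LinearMap.smul_apply, LinearMap.flip_apply, map_sub, map_smul, smul_eq_mul, hS]
  rw [hσv, hvu']
  ring

end

theorem stmt_16_general {V : Type*} [AddCommGroup V] [Module ℝ V] [FiniteDimensional ℝ V]
    (n : ℕ) (hdim : Module.finrank ℝ V = n)
    (g : V →ₗ[ℝ] V →ₗ[ℝ] ℝ)
    (hgsym : ∀ x y, g x y = g y x)
    (hgnd : ∀ x, (∀ y, g x y = 0) → x = 0)
    (u u' : V) (hunull : g u u = 0) (hu'null : g u' u' = 0) (huu' : g u u' = 1)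
    (σ : V →ₗ[ℝ] V →ₗ[ℝ] ℝ) (hσsym : ∀ x y, σ x y = σ y x)
    (c : ℝ) (hσu : ∀ w, σ u w = c * g u w)
    (hwedge : ∀ v, g u v = 0 → ∀ x y,
      g u x * σ v y - g u y * σ v x = g v x * σ u y - g v y * σ u x) :
    ∀ S : V →ₗ[ℝ] V, (∀ x y, g (S x) y = σ x y) →
      LinearMap.trace ℝ V S = (4 - (n : ℝ)) * c := by
  intro S hS
  have hSπ := comp_projHyperbolicCompl hS hgsym hgnd hunull hu'null huu' hσu hwedge
  calc LinearMap.trace ℝ V S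
      = LinearMap.trace ℝ V (S ∘ₗ ((g.flip u').smulRight u + (g.flip u).smulRight u'
          + projHyperbolicCompl g u u')) := by
        rw [← id_eq_smulRight_add_smulRight_add_projHyperbolicCompl, LinearMap.comp_id]
    _ = g (S u) u' + g (S u') u
          + (σ (projHyperbolicCompl g u u' u) u'
            - c * LinearMap.trace ℝ V (projHyperbolicCompl g u u')) := by
        simp only [LinearMap.comp_add, map_add, LinearMap.trace_comp_smulRight, hSπ, map_sub,
          LinearMap.trace_smulRight, map_smul, smul_eq_mul, LinearMap.comp_apply,
          LinearMap.flip_apply]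
    _ = (4 - n) * c := by
        rw [hS, hS, hσsym u', hσu, huu', projHyperbolicCompl_self_left hunull huu', map_zero,
          LinearMap.zero_apply, trace_projHyperbolicCompl hgsym huu', hdim]
        ring

/-- Let `g` be a nondegenerate symmetric bilinear form on `V`, `dim V = n ≥ 4`, with null
vectors `u, u'` satisfying `g(u,u') = 1`.  If `σ` is a symmetric bilinear form with
`g(u,·) ∧ σ(v,·) = g(v,·) ∧ σ(u,·)` for all `v ∈ u⊥` and `σu = c u` (i.e.
`σ(u,·) = c g(u,·)`), then `tr_g σ = (4 − n) c`, i.e. every endomorphism `S` with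
`g(Sx,·) = σ(x,·)` has trace `(4 − n) c`. -/
theorem stmt_16 {V : Type*} [AddCommGroup V] [Module ℝ V] [FiniteDimensional ℝ V]
    (n : ℕ) (hn : 4 ≤ n) (hdim : Module.finrank ℝ V = n)
    (g : V →ₗ[ℝ] V →ₗ[ℝ] ℝ)
    (hgsym : ∀ x y, g x y = g y x)
    (hgnd : ∀ x, (∀ y, g x y = 0) → x = 0)
    (u u' : V) (hunull : g u u = 0) (hu'null : g u' u' = 0) (huu' : g u u' = 1)
    (σ : V →ₗ[ℝ] V →ₗ[ℝ] ℝ) (hσsym : ∀ x y, σ x y = σ y x)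
    (c : ℝ) (hσu : ∀ w, σ u w = c * g u w)
    (hwedge : ∀ v, g u v = 0 → ∀ x y,
      g u x * σ v y - g u y * σ v x = g v x * σ u y - g v y * σ u x) :
    ∀ S : V →ₗ[ℝ] V, (∀ x y, g (S x) y = σ x y) →
      LinearMap.trace ℝ V S = (4 - (n : ℝ)) * c :=
  stmt_16_general n hdim g hgsym hgnd u u' hunull hu'null huu' σ hσsym c hσu hwedge
end
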